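/- arXiv:1210.0188 — 6 statements merged into one kernel-verified Lean document; each statement's English description precedes it below -/
import Mathlib

section
/- For positive integers n and q with q ≤ n, there is no representation n = aq + b(q+1) with nonnegative integers a, b if and only if ⌈n/(q+1)⌉ > n/q, i.e., q·⌈n/(q+1)⌉ > n. -/
/-! Gathering the `a + b` parts, `n` is a sum of parts `q` and `q + 1` exactly when some number
`k` of parts satisfies `q k ≤ n ≤ (q + 1) k`. The second inequality says `k ≥ ⌈n/(q+1)⌉`, and the
first is easiest to meet with the least such `k`, so a partition exists iff `q ⌈n/(q+1)⌉ ≤ n`. -/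

namespace Nat

theorem exists_mul_add_mul_succ_eq_iff (n d : ℕ) :
    (∃ a b : ℕ, n = a * d + b * (d + 1)) ↔ ∃ k, d * k ≤ n ∧ n ≤ (d + 1) * k := by
  constructor
  · rintro ⟨a, b, rfl⟩
    exact ⟨a + b, by nlinarith, by nlinarith⟩
  · rintro ⟨k, hlow, hhigh⟩
    -- `n - d k ≤ k` parts get enlarged from `d` to `d + 1`
    refine ⟨k - (n - d * k), n - d * k, ?_⟩
    zify [hlow, show n - d * k ≤ k by rw [add_mul, one_mul] at hhigh; omega]
    ring

theorem exists_mul_le_le_succ_mul_iff (n d : ℕ) :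
    (∃ k, d * k ≤ n ∧ n ≤ (d + 1) * k) ↔ d * (n ⌈/⌉ (d + 1)) ≤ n := by
  have hceil (k : ℕ) : n ⌈/⌉ (d + 1) ≤ k ↔ n ≤ (d + 1) * k := ceilDiv_le_iff_le_mul d.succ_pos
  constructor
  · rintro ⟨k, hlow, hhigh⟩
    exact (Nat.mul_le_mul_left d ((hceil k).2 hhigh)).trans hlow
  · exact fun h ↦ ⟨_, h, (hceil _).1 le_rfl⟩

end Nat

theorem no_q_partition_iff_general (n q : ℕ) :
    (¬ ∃ a b : ℕ, n = a * q + b * (q + 1)) ↔ q * ((n + q) / (q + 1)) > n := by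
  have hceil : (n + q) / (q + 1) = n ⌈/⌉ (q + 1) := by
    rw [Nat.ceilDiv_eq_add_pred_div, Nat.add_succ_sub_one]
  rw [Nat.exists_mul_add_mul_succ_eq_iff, Nat.exists_mul_le_le_succ_mul_iff, hceil, not_le]

/-- Corollary 2.1: there is no `q`-partition of `n` iff `⌈n/(q+1)⌉ > n/q`,
i.e. `q * ⌈n/(q+1)⌉ > n`. -/
theorem no_q_partition_iff (n q : ℕ) (hn : 0 < n) (hq : 0 < q) (hqn : q ≤ n) :
    (¬ ∃ a b : ℕ, n = a * q + b * (q + 1)) ↔ q * ((n + q) / (q + 1)) > n :=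
  no_q_partition_iff_general n q
end

section
/- Let q ≥ 1 and n = aq + b(q+1) with nonnegative integers a, b. The number of parts a+b is maximal among all q-partitions of n if and only if b < q. -/
/-!
Since `a q + b (q + 1) = (a + b) q + b`, every `q`-partition of `n` has at most `n / q` parts,
with equality exactly when `b < q`, i.e. when `b` is the remainder of `n` modulo `q`.
Conversely, if `b ≥ q`, trading `q` parts of size `q + 1` for `q + 1` parts of size `q`
gives a partition with one more part.
-/

theorem q_partition_eq_add_mul (q a b : ℕ) : a * q + b * (q + 1) = (a + b) * q + b := by
  ring

theorem q_partition_parts_le_div {q a b : ℕ} (hq : 0 < q) :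
    a + b ≤ (a * q + b * (q + 1)) / q := by
  rw [Nat.le_div_iff_mul_le hq, q_partition_eq_add_mul]
  exact Nat.le_add_right _ _

theorem q_partition_parts_eq_div {q a b : ℕ} (hb : b < q) :
    a + b = (a * q + b * (q + 1)) / q := by
  rw [q_partition_eq_add_mul, Nat.mul_comm _ q, Nat.mul_add_div (by omega),
    Nat.div_eq_of_lt hb, Nat.add_zero]

theorem q_partition_exchange {q a b : ℕ} (hb : q ≤ b) :
    (a + q + 1) * q + (b - q) * (q + 1) = a * q + b * (q + 1) := by
  obtain ⟨c, rfl⟩ := Nat.exists_eq_add_of_le hb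
  rw [Nat.add_sub_cancel_left]
  ring

theorem maximal_q_partition_iff_general (n q a b : ℕ)
    (h : n = a * q + b * (q + 1)) :
    (∀ a' b' : ℕ, n = a' * q + b' * (q + 1) → a' + b' ≤ a + b) ↔ b < q := by
  subst h
  constructor
  · intro hmax
    by_contra! hb
    have hmore := hmax (a + q + 1) (b - q) (q_partition_exchange hb).symm
    omega
  · intro hb a' b' h'
    rw [q_partition_parts_eq_div hb, h']
    exact q_partition_parts_le_div (by omega)

/-- Lemma 2.3 (characterization): a `q`-partition `n = aq + b(q+1)` is maximal
(in number of parts) iff `b < q`. -/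
theorem maximal_q_partition_iff (n q a b : ℕ) (hq : 1 ≤ q)
    (h : n = a * q + b * (q + 1)) :
    (∀ a' b' : ℕ, n = a' * q + b' * (q + 1) → a' + b' ≤ a + b) ↔ b < q :=
  maximal_q_partition_iff_general n q a b h
end

section
/- Let q ≥ 1 and n a positive integer with ⌈n/(q+1)⌉ = ⌊n/q⌋. Then n has at most one q-partition: if n = aq + b(q+1) and n = a'q + b'(q+1) with nonnegative integers, then a = a' and b = b'. -/
/-!
Every `q`-partition `n = a q + b (q + 1)` has `(a + b) q ≤ n ≤ (a + b)(q + 1)`, so its number of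
parts `a + b` lies between `⌈n / (q + 1)⌉` and `⌊n / q⌋`. When these agree, `a + b` is forced, and
then so is `b = n - (a + b) q`.
-/

namespace QPartition

variable {n q a b : ℕ}

theorem mul_add_mul_succ_eq (a b q : ℕ) : a * q + b * (q + 1) = (a + b) * q + b := by
  ring

theorem add_mul_le (h : n = a * q + b * (q + 1)) : (a + b) * q ≤ n := by
  rw [h, mul_add_mul_succ_eq]
  exact Nat.le_add_right _ _

theorem le_add_mul_succ (h : n = a * q + b * (q + 1)) : n ≤ (a + b) * (q + 1) := by
  rw [h, add_mul]
  gcongr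
  exact Nat.le_succ q

theorem add_le_div (hq : 0 < q) (h : n = a * q + b * (q + 1)) : a + b ≤ n / q :=
  (Nat.le_div_iff_mul_le hq).mpr (add_mul_le h)

theorem ceilDiv_le_add (h : n = a * q + b * (q + 1)) : (n + q) / (q + 1) ≤ a + b := by
  rw [Nat.div_le_iff_le_mul_add_pred (Nat.add_one_pos q), mul_comm]
  have := le_add_mul_succ h
  omega

theorem add_eq_div (hq : 0 < q) (hceil : (n + q) / (q + 1) = n / q)
    (h : n = a * q + b * (q + 1)) : a + b = n / q :=
  le_antisymm (add_le_div hq h) (hceil ▸ ceilDiv_le_add h)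

theorem eq_of_add_eq {a' b' : ℕ} (hsum : a + b = a' + b')
    (h : a * q + b * (q + 1) = a' * q + b' * (q + 1)) : a = a' ∧ b = b' := by
  rw [mul_add_mul_succ_eq, mul_add_mul_succ_eq, hsum] at h
  omega

end QPartition

theorem q_partition_unique_of_ceil_eq_floor_general (n q : ℕ) (hq : 1 ≤ q)
    (h : (n + q) / (q + 1) = n / q) :
    ∀ a b a' b' : ℕ, n = a * q + b * (q + 1) → n = a' * q + b' * (q + 1) →
      a = a' ∧ b = b' := by
  intro a b a' b' hab hab'
  have hsum : a + b = a' + b' := by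
    rw [QPartition.add_eq_div hq h hab, QPartition.add_eq_div hq h hab']
  exact QPartition.eq_of_add_eq hsum (hab ▸ hab')

/-- Lemma 2.4 (last part): if `⌈n/(q+1)⌉ = ⌊n/q⌋`, then `n` has at most one
`q`-partition. -/
theorem q_partition_unique_of_ceil_eq_floor (n q : ℕ) (hq : 1 ≤ q) (hn : 0 < n)
    (h : (n + q) / (q + 1) = n / q) :
    ∀ a b a' b' : ℕ, n = a * q + b * (q + 1) → n = a' * q + b' * (q + 1) →
      a = a' ∧ b = b' :=
  q_partition_unique_of_ceil_eq_floor_general n q hq h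
end

section
/- Let q ≥ 2. Suppose n = aq + b(q+1) with b < q (the maximal q-partition), and n = a'(q-1) + b'q with a' ≤ q-1 (the minimal (q-1)-partition). If q divides n then a + b = a' + b'; otherwise a + b + 1 = a' + b'. -/
/-!
Writing `n = aq + b(q+1) = (a+b)q + b` with `b < q` shows `a + b = ⌊n/q⌋`, and writing
`n = a'(q-1) + b'q = (a'+b')q - a'` with `a' < q` shows `a' + b' = ⌈n/q⌉`.
The floor and the ceiling of `n/q` agree exactly when `q ∣ n`, and otherwise differ by one.
-/

namespace Nat

theorem div_eq_of_eq_mul_add_mul_succ {n q a b : ℕ} (hb : b < q)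
    (h : n = a * q + b * (q + 1)) : n / q = a + b :=
  Nat.div_eq_of_lt_le (by rw [h]; nlinarith) (by rw [h]; nlinarith)

theorem ceilDiv_eq_of_eq_mul_pred_add_mul {n q a b : ℕ} (hq : 0 < q) (ha : a ≤ q - 1)
    (h : n = a * (q - 1) + b * q) : n ⌈/⌉ q = a + b := by
  obtain ⟨p, rfl⟩ := Nat.exists_eq_add_one_of_ne_zero hq.ne'
  simp only [Nat.add_sub_cancel] at ha h
  rw [ceilDiv_eq_add_pred_div, ← Nat.add_assoc, Nat.add_sub_cancel]
  exact Nat.div_eq_of_lt_le (by rw [h]; nlinarith) (by rw [h]; nlinarith)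

theorem ceilDiv_eq_div_of_dvd {n q : ℕ} (h : q ∣ n) : n ⌈/⌉ q = n / q := by
  rcases Nat.eq_zero_or_pos q with rfl | hq
  · simp
  obtain ⟨p, rfl⟩ := Nat.exists_eq_add_one_of_ne_zero hq.ne'
  obtain ⟨k, rfl⟩ := h
  rw [ceilDiv_eq_add_pred_div, ← Nat.add_assoc, Nat.add_sub_cancel, Nat.mul_div_cancel_left k hq]
  exact Nat.div_eq_of_lt_le (by nlinarith) (by nlinarith)

theorem ceilDiv_eq_div_add_one_of_not_dvd {n q : ℕ} (hq : 0 < q) (h : ¬q ∣ n) :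
    n ⌈/⌉ q = n / q + 1 := by
  have hr : 0 < n % q := Nat.pos_of_ne_zero (mt Nat.dvd_of_mod_eq_zero h)
  have hrq : n % q < q := Nat.mod_lt n hq
  have hn : q * (n / q) + n % q = n := Nat.div_add_mod n q
  obtain ⟨p, rfl⟩ := Nat.exists_eq_add_one_of_ne_zero hq.ne'
  rw [ceilDiv_eq_add_pred_div, ← Nat.add_assoc, Nat.add_sub_cancel]
  generalize n / (p + 1) = k, n % (p + 1) = r at *
  subst hn
  exact Nat.div_eq_of_lt_le (by nlinarith) (by nlinarith)

end Nat

theorem maximal_vs_minimal_partition_general (n q a b a' b' : ℕ)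
    (h1 : n = a * q + b * (q + 1)) (hb : b < q)
    (h2 : n = a' * (q - 1) + b' * q) (ha' : a' ≤ q - 1) :
    (q ∣ n → a + b = a' + b') ∧ (¬ q ∣ n → a + b + 1 = a' + b') := by
  have hq : 0 < q := b.zero_le.trans_lt hb
  rw [← Nat.div_eq_of_eq_mul_add_mul_succ hb h1, ← Nat.ceilDiv_eq_of_eq_mul_pred_add_mul hq ha' h2]
  exact ⟨fun h => (Nat.ceilDiv_eq_div_of_dvd h).symm,
    fun h => (Nat.ceilDiv_eq_div_add_one_of_not_dvd hq h).symm⟩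

/-- Lemma 2.5: comparing the maximal `q`-partition `n = aq + b(q+1)` (`b < q`)
with the minimal `(q-1)`-partition `n = a'(q-1) + b'q` (`a' ≤ q - 1`):
if `q ∣ n` then `a + b = a' + b'`, otherwise `a + b + 1 = a' + b'`. -/
theorem maximal_vs_minimal_partition (n q a b a' b' : ℕ) (hq : 2 ≤ q) (hn : 0 < n)
    (h1 : n = a * q + b * (q + 1)) (hb : b < q)
    (h2 : n = a' * (q - 1) + b' * q) (ha' : a' ≤ q - 1) :
    (q ∣ n → a + b = a' + b') ∧ (¬ q ∣ n → a + b + 1 = a' + b') :=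
  maximal_vs_minimal_partition_general n q a b a' b' h1 hb h2 ha'
end

section
/- If f is a proper coloring of the Kronecker product G × Kₙ where G is the complete multipartite graph with parts of sizes m₁,…,m_r, and some color class of f contains two vertices (u, s) and (u', s') with u, u' in different parts of G, then s = s', and consequently that color class has size at most m₁ + ⋯ + m_r. -/
open SimpleGraph
/-- Kronecker (tensor) product of simple graphs: `(x,y)` and `(x',y')` are
adjacent iff `x ~ x'` in `G` and `y ~ y'` in `H`. -/
def kronecker {α β : Type*} (G : SimpleGraph α) (H : SimpleGraph β) :
    SimpleGraph (α × β) where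
  Adj p q := G.Adj p.1 q.1 ∧ H.Adj p.2 q.2
  symm := ⟨fun p q h => ⟨h.1.symm, h.2.symm⟩⟩
  loopless := ⟨fun p h => G.loopless.irrefl p.1 h.1⟩

/-! In `G × K_β`, two vertices with the same colour and adjacent first coordinates must share
their second coordinate. If every vertex of `G` is adjacent to `u` or to `u'`, the colour of
`(u, s) = (u', s')` therefore pins the second coordinate of its whole class to `s`, so the class
injects into `V(G)`. In a complete multipartite graph this holds as soon as `u` and `u'` lie in
different parts. -/

namespace kronecker

variable {α β C : Type*} {G : SimpleGraph α}
  (f : (kronecker G (⊤ : SimpleGraph β)).Coloring C)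

lemma snd_eq_of_adj_of_color_eq {x y : α} {s t : β} (hxy : G.Adj x y)
    (h : f (x, s) = f (y, t)) : s = t := by
  by_contra hst
  exact f.valid ⟨hxy, hst⟩ h

variable {u u' : α} {s s' : β}

lemma snd_eq_of_color_eq_of_forall_adj_or_adj (hdom : ∀ w, G.Adj w u ∨ G.Adj w u')
    (hcol : f (u, s) = f (u', s')) {w : α} {t : β} (h : f (w, t) = f (u, s)) : t = s := by
  have huu' : G.Adj u u' := (hdom u).resolve_left (G.loopless.irrefl u)
  have hss' : s = s' := snd_eq_of_adj_of_color_eq f huu' hcol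
  rcases hdom w with hw | hw
  · exact snd_eq_of_adj_of_color_eq f hw h
  · exact (snd_eq_of_adj_of_color_eq f hw (h.trans hcol)).trans hss'.symm

lemma card_colorClass_le_of_forall_adj_or_adj [Fintype α] [Fintype β] [DecidableEq C]
    (hdom : ∀ w, G.Adj w u ∨ G.Adj w u') (hcol : f (u, s) = f (u', s')) :
    (Finset.univ.filter fun v : α × β => f v = f (u, s)).card ≤ Fintype.card α := by
  have hsub : (Finset.univ.filter fun v : α × β => f v = f (u, s)) ⊆
      Finset.univ.map (Function.Embedding.sectL α s) := by
    rintro ⟨w, t⟩ hwt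
    rw [Finset.mem_filter] at hwt
    rw [snd_eq_of_color_eq_of_forall_adj_or_adj f hdom hcol hwt.2]
    simp
  simpa using Finset.card_le_card hsub

end kronecker

lemma completeMultipartiteGraph_adj_or_adj_of_fst_ne {ι : Type*} {V : ι → Type*}
    {u u' : Σ i, V i} (hpart : u.1 ≠ u'.1) (w : Σ i, V i) :
    (completeMultipartiteGraph V).Adj w u ∨ (completeMultipartiteGraph V).Adj w u' :=
  (hpart.ne_or_ne w.1).imp Ne.symm Ne.symm

/-- Claim in Lemma 3.1: if a color class of a proper coloring of
`K_{m₁,…,m_r} × Kₙ` contains vertices `(u, s)` and `(u', s')` with `u, u'` in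
different parts, then `s = s'`; consequently that color class has size at most
`m₁ + ⋯ + m_r`. -/
theorem color_class_crossing_parts {r n : ℕ} (m : Fin r → ℕ) {C : Type*}
    [DecidableEq C]
    (f : (kronecker (completeMultipartiteGraph (fun i => Fin (m i)))
        (⊤ : SimpleGraph (Fin n))).Coloring C)
    (u u' : Σ i : Fin r, Fin (m i)) (s s' : Fin n)
    (hpart : u.1 ≠ u'.1) (hcol : f (u, s) = f (u', s')) :
    s = s' ∧
      (Finset.univ.filter fun v : (Σ i : Fin r, Fin (m i)) × Fin n =>
        f v = f (u, s)).card ≤ ∑ i, m i := by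
  have hdom := completeMultipartiteGraph_adj_or_adj_of_fst_ne hpart
  refine ⟨kronecker.snd_eq_of_adj_of_color_eq f hpart hcol, ?_⟩
  simpa using kronecker.card_colorClass_le_of_forall_adj_or_adj f hdom hcol
end

section
/- Let m₁,…,m_r, n with m = Σm_i ≤ n, and suppose Σᵢ ⌈m_i n/(m+1)⌉ ≥ ⌊mn/(m+1)⌋ and m_i n/(m+1) ≥ ⌈m_i n/(m+2)⌉ for all i. Define h = min{t ≥ m+2 : (∃i, m_i n/t < ⌈m_i n/(t+1)⌉) or (∃ i ≠ j, t ∤ m_i n and t ∤ m_j n)}. Then Σᵢ ⌈m_i n/h⌉ − 1 < ⌈mn/(m+1)⌉. -/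
/-! Since `h ≥ m + 2`, each `⌈mᵢn/h⌉` is at most `⌈mᵢn/(m+2)⌉ ≤ mᵢn/(m+1)`, so the sum is at most
`⌊mn/(m+1)⌋ ≤ ⌈mn/(m+1)⌉`. Subtracting one gives a strict inequality because `⌈mn/(m+1)⌉ > 0`:
the condition defining `h` cannot hold unless some `mᵢn` is positive. -/

theorem Nat.add_sub_one_div_le_add_sub_one_div {a d h : ℕ} (hd : 0 < d) (hdh : d ≤ h) :
    (a + (h - 1)) / h ≤ (a + (d - 1)) / d := by
  have hq := Nat.lt_mul_div_succ (a + (d - 1)) hd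
  generalize (a + (d - 1)) / d = q at hq ⊢
  have : a + (h - 1) < h * (q + 1) := by
    have := Nat.mul_le_mul_right q hdh
    rw [Nat.mul_succ] at hq ⊢
    omega
  exact Nat.lt_succ_iff.mp (Nat.div_lt_of_lt_mul this)

theorem Finset.sum_le_sum_div_of_mul_le {ι : Type*} {s : Finset ι} {c x : ι → ℕ} {d : ℕ}
    (hd : 0 < d) (hcx : ∀ i ∈ s, d * c i ≤ x i) : ∑ i ∈ s, c i ≤ (∑ i ∈ s, x i) / d := by
  rw [Nat.le_div_iff_mul_le hd, Finset.sum_mul]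
  exact Finset.sum_le_sum fun i hi => (Nat.mul_comm _ _).trans_le (hcx i hi)

theorem claim4_arith_general {r n h : ℕ} (m : Fin r → ℕ)
    (h2 : ∀ i, ((∑ i, m i) + 1) * ((m i * n + ((∑ i, m i) + 1)) / ((∑ i, m i) + 2)) ≤
      m i * n)
    (hh : IsLeast
      {t : ℕ | (∑ i, m i) + 2 ≤ t ∧
        ((∃ i, m i * n < t * ((m i * n + t) / (t + 1))) ∨
          (∃ i j, i ≠ j ∧ ¬ t ∣ m i * n ∧ ¬ t ∣ m j * n))} h) :
    (∑ i, (m i * n + (h - 1)) / h) - 1 <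
      ((∑ i, m i) * n + (∑ i, m i)) / ((∑ i, m i) + 1) := by
  set M := ∑ i, m i
  obtain ⟨⟨hMh, hcase⟩, -⟩ := hh
  have hpos : ∃ i, 0 < m i * n := by
    rcases hcase with ⟨i, hi⟩ | ⟨i, -, -, hi, -⟩
    · refine ⟨i, Nat.pos_of_ne_zero fun h0 => ?_⟩
      rw [h0, Nat.zero_add, Nat.div_eq_of_lt (Nat.lt_succ_self _)] at hi
      omega
    · exact ⟨i, Nat.pos_of_ne_zero fun h0 => hi (h0 ▸ dvd_zero _)⟩
  obtain ⟨i, hi⟩ := hpos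
  have hMn : 0 < M * n := hi.trans_le <| Nat.mul_le_mul_right n <|
    Finset.single_le_sum (fun j _ => Nat.zero_le (m j)) (Finset.mem_univ i)
  have hsum : ∑ i, (m i * n + (h - 1)) / h ≤ M * n / (M + 1) :=
    calc ∑ i, (m i * n + (h - 1)) / h
        ≤ ∑ i, (m i * n + (M + 1)) / (M + 2) :=
          Finset.sum_le_sum fun i _ => Nat.add_sub_one_div_le_add_sub_one_div (by omega) hMh
      _ ≤ (∑ i, m i * n) / (M + 1) := Finset.sum_le_sum_div_of_mul_le (by omega) fun i _ => h2 i
      _ = M * n / (M + 1) := by rw [← Finset.sum_mul]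
  have hfloor : M * n / (M + 1) ≤ (M * n + M) / (M + 1) := Nat.div_le_div_right (by omega)
  have hceil : 0 < (M * n + M) / (M + 1) :=
    Nat.div_pos (by nlinarith) (by omega)
  omega

/-- Claim 4's arithmetic core in Theorem 3.2: with `m = ∑ mᵢ ≤ n`,
`∑ᵢ ⌈mᵢn/(m+1)⌉ ≥ ⌊mn/(m+1)⌋`, and `mᵢn/(m+1) ≥ ⌈mᵢn/(m+2)⌉` for all `i`,
and `h` the least `t ≥ m+2` such that either `mᵢn/t < ⌈mᵢn/(t+1)⌉` for some
`i`, or `t` divides neither `mᵢn` nor `mⱼn` for some `i ≠ j`, one has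
`∑ᵢ ⌈mᵢn/h⌉ − 1 < ⌈mn/(m+1)⌉`. -/
theorem claim4_arith {r n h : ℕ} (m : Fin r → ℕ) (hm : ∀ i, 0 < m i)
    (hmn : (∑ i, m i) ≤ n)
    (h1 : (∑ i, (m i * n + (∑ i, m i)) / ((∑ i, m i) + 1)) ≥
      ((∑ i, m i) * n) / ((∑ i, m i) + 1))
    (h2 : ∀ i, ((∑ i, m i) + 1) * ((m i * n + ((∑ i, m i) + 1)) / ((∑ i, m i) + 2)) ≤
      m i * n)
    (hh : IsLeast
      {t : ℕ | (∑ i, m i) + 2 ≤ t ∧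
        ((∃ i, m i * n < t * ((m i * n + t) / (t + 1))) ∨
          (∃ i j, i ≠ j ∧ ¬ t ∣ m i * n ∧ ¬ t ∣ m j * n))} h) :
    (∑ i, (m i * n + (h - 1)) / h) - 1 <
      ((∑ i, m i) * n + (∑ i, m i)) / ((∑ i, m i) + 1) :=
  claim4_arith_general m h2 hh
end
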